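/- It is possible to partition ℝ into countably many subsets A₁, B₁, A₂, B₂, … such that A_j ⊔ f_j(B_j) = ℝ for every j ≥ 1, where each f_j is a Lebesgue-measure-preserving bijection of ℝ of the form x ↦ σ_j(⌊x⌋) + (x - ⌊x⌋) for a permutation σ_j of ℤ. -/

import Mathlib

/-!
Split ℤ into countably many infinite sets `a₀, b₀, a₁, b₁, …`. Since `b_j` and `ℤ \ a_j` are
both countably infinite with infinite complements, some permutation `σ_j` of ℤ carries `b_j`
onto `ℤ \ a_j`. Pulling everything back along `⌊·⌋` gives the sets `A_j, B_j ⊆ ℝ`, and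
`pwr σ_j` moves each unit interval `[n, n + 1)` rigidly onto `[σ_j n, σ_j n + 1)`, so it is a
bijection preserving Lebesgue measure that maps `B_j` onto `ℝ \ A_j`.
-/

/-- The piecewise rigid extension of a permutation of ℤ to ℝ. -/
noncomputable def pwr (σ : Equiv.Perm ℤ) : ℝ → ℝ :=
  fun x => (σ ⌊x⌋ : ℝ) + (x - ⌊x⌋)

open Set MeasureTheory

lemma measure_eq_tsum_inter_Ico (μ : Measure ℝ) {s : Set ℝ} (hs : MeasurableSet s) :
    μ s = ∑' n : ℤ, μ (s ∩ Ico (n : ℝ) (n + 1)) := by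
  rw [← measure_iUnion (fun i j hij => ((pairwise_disjoint_Ico_intCast ℝ) hij).mono
      inter_subset_right inter_subset_right) (fun n => hs.inter measurableSet_Ico),
    ← inter_iUnion, iUnion_Ico_intCast, inter_univ]

section pwr

variable (σ : Equiv.Perm ℤ)

lemma pwr_apply (x : ℝ) : pwr σ x = σ ⌊x⌋ + Int.fract x := rfl

lemma floor_pwr (x : ℝ) : ⌊pwr σ x⌋ = σ ⌊x⌋ := by
  rw [pwr_apply, Int.floor_intCast_add, Int.floor_fract, add_zero]

lemma pwr_symm_pwr : Function.LeftInverse (pwr σ.symm) (pwr σ) := fun x => by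
  rw [pwr_apply, floor_pwr, pwr_apply, Int.fract_intCast_add, Int.fract_fract,
    Equiv.symm_apply_apply, Int.floor_add_fract]

lemma pwr_pwr_symm : Function.RightInverse (pwr σ.symm) (pwr σ) :=
  fun x => by simpa using pwr_symm_pwr σ.symm x

lemma bijective_pwr : Function.Bijective (pwr σ) :=
  Function.bijective_iff_has_inverse.2 ⟨_, pwr_symm_pwr σ, pwr_pwr_symm σ⟩

lemma measurable_pwr : Measurable (pwr σ) :=
  ((measurable_from_top (f := fun n : ℤ => (σ n : ℝ))).comp Int.measurable_floor).add
    measurable_fract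

lemma image_pwr_preimage_floor (s : Set ℤ) :
    pwr σ '' (Int.floor ⁻¹' s) = Int.floor ⁻¹' (σ '' s) := by
  ext x
  simp [image_eq_preimage_of_inverse (pwr_symm_pwr σ) (pwr_pwr_symm σ), floor_pwr,
    Equiv.image_eq_preimage_symm]

lemma pwr_eq_add_of_mem_Ico {n : ℤ} {x : ℝ} (hx : x ∈ Ico (n : ℝ) (n + 1)) :
    pwr σ x = x + (σ n - n) := by
  rw [pwr, Int.floor_eq_on_Ico n x hx]
  ring

lemma preimage_pwr_inter_Ico (s : Set ℝ) (n : ℤ) :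
    pwr σ ⁻¹' s ∩ Ico (n : ℝ) (n + 1) =
      (· + ((σ n : ℝ) - n)) ⁻¹' (s ∩ Ico (σ n : ℝ) (σ n + 1)) := by
  rw [preimage_inter, preimage_add_const_Ico, sub_sub_cancel,
    show (σ n : ℝ) + 1 - (σ n - n) = n + 1 by ring]
  ext x
  simp only [mem_inter_iff, mem_preimage]
  exact and_congr_left fun hx => by rw [pwr_eq_add_of_mem_Ico σ hx]

lemma measurePreserving_pwr : MeasurePreserving (pwr σ) volume volume := by
  refine ⟨measurable_pwr σ, Measure.ext fun s hs => ?_⟩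
  rw [Measure.map_apply (measurable_pwr σ) hs, measure_eq_tsum_inter_Ico _ (measurable_pwr σ hs),
    measure_eq_tsum_inter_Ico _ hs, ← σ.tsum_eq fun m : ℤ => volume (s ∩ Ico (m : ℝ) (m + 1))]
  simp only [preimage_pwr_inter_Ico, measure_preimage_add_right]

end pwr

lemma exists_perm_image_eq {α : Type*} [Countable α] {S T : Set α} (hS : S.Infinite)
    (hT : T.Infinite) (hSc : Sᶜ.Infinite) (hTc : Tᶜ.Infinite) :
    ∃ σ : Equiv.Perm α, σ '' S = T := by
  have := hS.to_subtype; have := hT.to_subtype; have := hSc.to_subtype; have := hTc.to_subtype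
  obtain ⟨φ⟩ : Nonempty (S ≃ T) := nonempty_equiv_of_countable
  obtain ⟨ψ⟩ : Nonempty (↥Sᶜ ≃ ↥Tᶜ) := nonempty_equiv_of_countable
  classical
  set σ : Equiv.Perm α := φ.subtypeCongr ψ
  have hσ (x : α) : σ x ∈ T ↔ x ∈ S := by
    by_cases hx : x ∈ S
    · simp [σ, Equiv.subtypeCongr, hx]
    · simpa [σ, Equiv.subtypeCongr, hx] using mem_compl_iff _ _ |>.1 (ψ ⟨x, hx⟩).2
  exact ⟨σ, by ext y; simpa using (hσ (σ.symm y)).symm⟩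

lemma exists_infinite_fibers (α : Type*) [Countable α] [Infinite α] :
    ∃ c : α → ℕ, ∀ k, (c ⁻¹' {k}).Infinite := by
  obtain ⟨e⟩ : Nonempty (ℕ × α ≃ α) := nonempty_equiv_of_countable
  refine ⟨fun a => (e.symm a).1, fun k => infinite_of_injective_forall_mem
    (f := fun a => e (k, a)) (fun a b h => (Prod.ext_iff.1 (e.injective h)).2) fun a => ?_⟩
  simp

lemma exists_paradoxical_partition (α : Type*) [Countable α] [Infinite α] :
    ∃ (a b : ℕ → Set α) (σ : ℕ → Equiv.Perm α),
      (⋃ j, a j ∪ b j) = univ ∧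
      (∀ i j, i ≠ j → Disjoint (a i) (a j)) ∧
      (∀ i j, i ≠ j → Disjoint (b i) (b j)) ∧
      (∀ i j, Disjoint (a i) (b j)) ∧
      ∀ j, σ j '' b j = (a j)ᶜ := by
  obtain ⟨c, hc⟩ := exists_infinite_fibers α
  have hdisj {k l : ℕ} (h : k ≠ l) : Disjoint (c ⁻¹' {k}) (c ⁻¹' {l}) :=
    (disjoint_singleton.2 h).preimage c
  have hσ (j : ℕ) : ∃ σ : Equiv.Perm α, σ '' (c ⁻¹' {2 * j + 1}) = (c ⁻¹' {2 * j})ᶜ := by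
    have hab : Disjoint (c ⁻¹' {2 * j}) (c ⁻¹' {2 * j + 1}) := hdisj (by omega)
    exact exists_perm_image_eq (hc _) ((hc _).mono hab.subset_compl_left)
      ((hc _).mono hab.subset_compl_right) (by rw [compl_compl]; exact hc _)
  choose σ hσ using hσ
  refine ⟨fun j => c ⁻¹' {2 * j}, fun j => c ⁻¹' {2 * j + 1}, σ, ?_,
    fun i j h => hdisj (by omega), fun i j h => hdisj (by omega), fun i j => hdisj (by omega), hσ⟩
  refine eq_univ_of_forall fun x => mem_iUnion.2 ⟨c x / 2, ?_⟩
  simp only [mem_union, mem_preimage, mem_singleton_iff]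
  omega

theorem real_line_countable_paradoxical :
    ∃ (A B : ℕ → Set ℝ) (σ : ℕ → Equiv.Perm ℤ),
      (⋃ j, A j ∪ B j) = Set.univ ∧
      (∀ i j, i ≠ j → Disjoint (A i) (A j)) ∧
      (∀ i j, i ≠ j → Disjoint (B i) (B j)) ∧
      (∀ i j, Disjoint (A i) (B j)) ∧
      (∀ j, Function.Bijective (pwr (σ j)) ∧
        MeasureTheory.MeasurePreserving (pwr (σ j))
          MeasureTheory.volume MeasureTheory.volume) ∧
      ∀ j, Disjoint (A j) (pwr (σ j) '' B j) ∧
        A j ∪ pwr (σ j) '' B j = Set.univ := by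
  obtain ⟨a, b, σ, hcover, haa, hbb, hab, hσ⟩ := exists_paradoxical_partition ℤ
  refine ⟨fun j => Int.floor ⁻¹' a j, fun j => Int.floor ⁻¹' b j, σ, ?_,
    fun i j h => (haa i j h).preimage _, fun i j h => (hbb i j h).preimage _,
    fun i j => (hab i j).preimage _, fun j => ⟨bijective_pwr _, measurePreserving_pwr _⟩,
    fun j => ?_⟩
  · simp_rw [← preimage_union, ← preimage_iUnion, hcover, preimage_univ]
  · rw [image_pwr_preimage_floor, hσ, preimage_compl]
    exact ⟨disjoint_compl_right, union_compl_self _⟩
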